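/- Langford–Seeger-style moment bound: for m ∼ Binomial(n, P) with P ∈ [0,1] and n ≥ 1, E[exp(n·kl(m/n, P))] ≤ 2√n, where kl(a,b) = a·log(a/b) + (1−a)·log((1−a)/(1−b)) is the binary KL divergence (with the conventions 0·log(0/b)=0). -/
import Mathlib


open Real

/-- The binomial probability mass function `Bio(m; n, P)`. -/
noncomputable def Bio (m n : ℕ) (P : ℝ) : ℝ :=
  (n.choose m : ℝ) * P ^ m * (1 - P) ^ (n - m)

/-- The binary Kullback–Leibler divergence `kl(a,b)` between Bernoulli distributions
(with the convention `0·log(0/b) = 0`, automatic since `Real.log 0 = 0`). -/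
noncomputable def binKL (a b : ℝ) : ℝ :=
  a * Real.log (a / b) + (1 - a) * Real.log ((1 - a) / (1 - b))


open Stirling

lemma sqrt_pi_le_stirling (n : ℕ) (hn : 1 ≤ n) : Real.sqrt π ≤ stirlingSeq n := by
  obtain ⟨k, rfl⟩ := Nat.exists_eq_add_of_le hn
  have h := Stirling.stirlingSeq'_antitone.le_of_tendsto
    (Stirling.tendsto_stirlingSeq_sqrt_pi.comp (Filter.tendsto_add_atTop_nat 1)) k
  simpa [Function.comp, Nat.succ_eq_add_one, Nat.add_comm] using h

lemma stirling_le (n : ℕ) (hn : 1 ≤ n) : stirlingSeq n ≤ exp 1 / Real.sqrt 2 := by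
  obtain ⟨k, rfl⟩ := Nat.exists_eq_add_of_le hn
  have h := Stirling.stirlingSeq'_antitone (Nat.zero_le k)
  simpa [Function.comp, Nat.succ_eq_add_one, Nat.add_comm] using h

lemma factorial_lower (m : ℕ) (hm : 1 ≤ m) :
    Real.sqrt π * (Real.sqrt (2 * m) * (m : ℝ) ^ m / Real.exp m) ≤ (Nat.factorial m) := by
  have h := sqrt_pi_le_stirling m hm
  have hpos : 0 < Real.sqrt (2 * m) * ((m : ℝ) / exp 1) ^ m := by
    positivity
  rw [stirlingSeq, le_div_iff₀ hpos] at h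
  calc Real.sqrt π * (Real.sqrt (2 * m) * (m : ℝ) ^ m / Real.exp m)
      = Real.sqrt π * (Real.sqrt (2 * ↑m) * ((m : ℝ) / exp 1) ^ m) := by
        rw [div_pow, ← Real.exp_nat_mul, mul_one]
        ring
    _ ≤ (Nat.factorial m) := h

lemma factorial_upper (n : ℕ) (hn : 1 ≤ n) :
    ((Nat.factorial n) : ℝ) ≤ exp 1 * Real.sqrt n * (n : ℝ) ^ n / Real.exp n := by
  have h := stirling_le n hn
  have hpos : 0 < Real.sqrt (2 * n) * ((n : ℝ) / exp 1) ^ n := by positivity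
  rw [stirlingSeq, div_le_iff₀ hpos] at h
  calc ((Nat.factorial n) : ℝ) ≤ exp 1 / Real.sqrt 2 * (Real.sqrt (2 * n) * ((n : ℝ) / exp 1) ^ n) := h
    _ = exp 1 * Real.sqrt n * (n : ℝ) ^ n / Real.exp n := by
        rw [div_pow, ← Real.exp_nat_mul, mul_one, show (2 * n : ℝ) = 2 * n from rfl,
          Real.sqrt_mul (by norm_num : (0:ℝ) ≤ 2)]
        have h2 : Real.sqrt 2 ≠ 0 := by positivity
        field_simp

lemma sqrt_add_le (x y : ℝ) (hx : 0 ≤ x) (hy : 0 ≤ y) :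
    Real.sqrt (x + y) ≤ Real.sqrt x + Real.sqrt y := by
  have h : x + y ≤ (Real.sqrt x + Real.sqrt y) ^ 2 := by
    nlinarith [Real.sq_sqrt hx, Real.sq_sqrt hy, Real.sqrt_nonneg x, Real.sqrt_nonneg y]
  calc Real.sqrt (x + y) ≤ Real.sqrt ((Real.sqrt x + Real.sqrt y) ^ 2) := Real.sqrt_le_sqrt h
    _ = _ := Real.sqrt_sq (by positivity)

lemma term_bound (n m : ℕ) (hm1 : 1 ≤ m) (hm2 : m < n) :
    (n.choose m : ℝ) * (m : ℝ) ^ m * ((n - m : ℕ) : ℝ) ^ (n - m) / (n : ℝ) ^ n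
      ≤ exp 1 / (2 * π) * (Real.sqrt (1 / m) + Real.sqrt (1 / (n - m : ℕ))) := by
  set b : ℕ := n - m with hb
  have hb1 : 1 ≤ b := by omega
  have hn1 : 1 ≤ n := by omega
  have hA : (0:ℝ) < m := by exact_mod_cast hm1
  have hB : (0:ℝ) < b := by exact_mod_cast hb1
  have hN : (0:ℝ) < n := by exact_mod_cast hn1
  have hABN : (m : ℝ) + b = n := by
    have : m + b = n := by omega
    exact_mod_cast this
  -- step 2: sqrt(N/(A*B)) ≤ sqrt(1/A) + sqrt(1/B)
  have step2 : Real.sqrt ((n : ℝ) / (m * b)) ≤ Real.sqrt (1 / m) + Real.sqrt (1 / b) := by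
    have h1 : (n : ℝ) / ((m : ℝ) * b) = 1 / m + 1 / b := by
      field_simp
      linarith [hABN]
    rw [h1]
    exact sqrt_add_le _ _ (by positivity) (by positivity)
  -- step 1
  have step1 : (n.choose m : ℝ) * (m : ℝ) ^ m * (b : ℝ) ^ b / (n : ℝ) ^ n
      ≤ exp 1 / (2 * π) * Real.sqrt ((n : ℝ) / (m * b)) := by
    have hchoose : (n.choose m : ℝ) = (Nat.factorial n) / ((Nat.factorial m) * (Nat.factorial b)) :=
      Nat.cast_choose ℝ hm2.le
    have hfm : (0:ℝ) < (Nat.factorial m) := by exact_mod_cast (Nat.factorial_pos m)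
    have hfb : (0:ℝ) < (Nat.factorial b) := by exact_mod_cast (Nat.factorial_pos b)
    have hfn : (0:ℝ) < (Nat.factorial n) := by exact_mod_cast (Nat.factorial_pos n)
    rw [hchoose, div_le_iff₀ (by positivity), div_mul_eq_mul_div, div_mul_eq_mul_div,
      div_le_iff₀ (by positivity)]
    -- goal: n! * A^m * B^b ≤ (e/(2π) * √(N/(A·B)) * N^n) * (m! * b!)
    have key : exp 1 / (2 * π) * Real.sqrt ((n:ℝ) / (m * b)) * (n:ℝ)^n *
        ((Real.sqrt π * (Real.sqrt (2 * m) * (m : ℝ) ^ m / Real.exp m)) *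
         (Real.sqrt π * (Real.sqrt (2 * b) * (b : ℝ) ^ b / Real.exp b)))
        = exp 1 * Real.sqrt n * (n : ℝ) ^ n / Real.exp n * ((m:ℝ)^m * (b:ℝ)^b) := by
      have hπ : Real.sqrt π * Real.sqrt π = π := Real.mul_self_sqrt pi_pos.le
      have h2 : Real.sqrt (2 * (m:ℝ)) * Real.sqrt (2 * (b:ℝ)) = 2 * Real.sqrt ((m:ℝ) * b) := by
        rw [← Real.sqrt_mul (by positivity)]
        rw [show (2 * (m:ℝ)) * (2 * (b:ℝ)) = 4 * ((m:ℝ) * b) by ring]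
        rw [Real.sqrt_mul (by norm_num), show Real.sqrt 4 = 2 by
          rw [show (4:ℝ) = 2^2 by norm_num, Real.sqrt_sq (by norm_num)]]
      have h4 : Real.exp m * Real.exp b = Real.exp n := by
        rw [← Real.exp_add, hABN]
      have h3 : Real.sqrt ((n:ℝ) / (m * b)) * Real.sqrt ((m:ℝ) * b) = Real.sqrt n := by
        rw [← Real.sqrt_mul (by positivity)]
        congr 1
        field_simp
      rw [show (Real.sqrt π * (Real.sqrt (2 * m) * (m : ℝ) ^ m / Real.exp m)) *
         (Real.sqrt π * (Real.sqrt (2 * b) * (b : ℝ) ^ b / Real.exp b))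
         = (Real.sqrt π * Real.sqrt π) * (Real.sqrt (2 * (m:ℝ)) * Real.sqrt (2 * (b:ℝ)))
           * ((m:ℝ)^m * (b:ℝ)^b) / (Real.exp m * Real.exp b) by push_cast; ring]
      rw [hπ, h2, h4]
      rw [show exp 1 / (2 * π) * Real.sqrt ((n:ℝ) / (m * b)) * (n:ℝ)^n *
          (π * (2 * Real.sqrt ((m:ℝ) * b)) * ((m:ℝ)^m * (b:ℝ)^b) / Real.exp n)
          = exp 1 * (Real.sqrt ((n:ℝ) / (m * b)) * Real.sqrt ((m:ℝ) * b)) * (n:ℝ)^n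
            * ((m:ℝ)^m * (b:ℝ)^b) / Real.exp n * ((2 * π) / (2 * π)) by ring]
      rw [div_self (by positivity), mul_one, h3]
      ring
    calc (Nat.factorial n : ℝ) * (m:ℝ)^m * (b:ℝ)^b
        ≤ (exp 1 * Real.sqrt n * (n : ℝ) ^ n / Real.exp n) * ((m:ℝ)^m * (b:ℝ)^b) := by
          rw [mul_assoc]
          gcongr
          exact factorial_upper n hn1
      _ = exp 1 / (2 * π) * Real.sqrt ((n:ℝ) / (m * b)) * (n:ℝ)^n *
          ((Real.sqrt π * (Real.sqrt (2 * m) * (m : ℝ) ^ m / Real.exp m)) *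
           (Real.sqrt π * (Real.sqrt (2 * b) * (b : ℝ) ^ b / Real.exp b))) := key.symm
      _ ≤ exp 1 / (2 * π) * Real.sqrt ((n:ℝ) / (m * b)) * (n:ℝ)^n *
          ((Nat.factorial m : ℝ) * (Nat.factorial b : ℝ)) := by
          refine mul_le_mul_of_nonneg_left ?_ (by positivity)
          exact mul_le_mul (factorial_lower m hm1) (factorial_lower b hb1)
            (by positivity) (by positivity)
  calc (n.choose m : ℝ) * (m : ℝ) ^ m * (b : ℝ) ^ b / (n : ℝ) ^ n
      ≤ exp 1 / (2 * π) * Real.sqrt ((n : ℝ) / (m * b)) := step1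
    _ ≤ _ := by
        refine mul_le_mul_of_nonneg_left step2 (by positivity)

lemma sum_inv_sqrt (k : ℕ) (hk : 1 ≤ k) :
    ∑ m ∈ Finset.Icc 1 k, Real.sqrt (1 / (m : ℝ)) ≤ 2 * Real.sqrt k - 1 := by
  induction k, hk using Nat.le_induction with
  | base => norm_num
  | succ k hk ih =>
      rw [Finset.sum_Icc_succ_top (by omega)]
      have hk0 : (0:ℝ) < k := by exact_mod_cast hk
      have hstep : Real.sqrt (1 / ((k:ℝ) + 1)) ≤ 2 * Real.sqrt (k + 1) - 2 * Real.sqrt k := by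
        have h1 : Real.sqrt ((k:ℝ) * (k + 1)) ≤ (k : ℝ) + 1/2 := by
          rw [show ((k:ℝ) + 1/2) = Real.sqrt (((k:ℝ) + 1/2)^2) from
            (Real.sqrt_sq (by positivity)).symm]
          apply Real.sqrt_le_sqrt
          nlinarith
        have h2 : Real.sqrt (k:ℝ) * Real.sqrt ((k:ℝ) + 1) = Real.sqrt ((k:ℝ) * (k+1)) :=
          (Real.sqrt_mul (by positivity) _).symm
        have h3 : (0:ℝ) < Real.sqrt ((k:ℝ) + 1) := Real.sqrt_pos.mpr (by positivity)
        have h4 : Real.sqrt ((k:ℝ)+1) * Real.sqrt ((k:ℝ)+1) = (k:ℝ)+1 :=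
          Real.mul_self_sqrt (by positivity)
        rw [show (1 : ℝ) / ((k:ℝ)+1) = ((k:ℝ)+1)⁻¹ by ring, Real.sqrt_inv,
          inv_le_iff_one_le_mul₀ h3]
        nlinarith
      push_cast
      linarith

lemma sum_reflect (n : ℕ) :
    ∑ m ∈ Finset.Ico 1 n, Real.sqrt (1 / ((n - m : ℕ) : ℝ))
      = ∑ m ∈ Finset.Ico 1 n, Real.sqrt (1 / (m : ℝ)) := by
  apply Finset.sum_nbij' (fun m => n - m) (fun m => n - m)
  · intro a ha
    simp only [Finset.mem_Ico] at ha ⊢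
    omega
  · intro a ha
    simp only [Finset.mem_Ico] at ha ⊢
    omega
  · intro a ha
    simp only [Finset.mem_Ico] at ha
    omega
  · intro a ha
    simp only [Finset.mem_Ico] at ha
    omega
  · intro a ha
    rfl

lemma term_eq (n m : ℕ) (hn : 1 ≤ n) (hm : m ≤ n) (P : ℝ) (hP : P ∈ Set.Ioo (0:ℝ) 1) :
    Bio m n P * Real.exp ((n : ℝ) * binKL ((m : ℝ) / n) P)
      = (n.choose m : ℝ) * (m : ℝ) ^ m * ((n - m : ℕ) : ℝ) ^ (n - m) / (n : ℝ) ^ n := by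
  obtain ⟨hP0, hP1⟩ := hP
  have hq : (0:ℝ) < 1 - P := by linarith
  have hN : (0:ℝ) < n := by exact_mod_cast hn
  have hcast : ((n - m : ℕ) : ℝ) = (n : ℝ) - m := by
    push_cast [Nat.cast_sub hm]; ring
  have hexp : (n:ℝ) * binKL ((m:ℝ)/n) P
      = (m:ℝ) * Real.log ((m:ℝ)/n/P) + ((n - m : ℕ):ℝ) * Real.log (((n - m : ℕ):ℝ)/n/(1-P)) := by
    unfold binKL
    have h1 : 1 - (m:ℝ)/n = ((n - m : ℕ):ℝ)/n := by
      rw [hcast]; field_simp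
    rw [h1]
    field_simp
  rw [hexp, Real.exp_add]
  have e1 : Real.exp ((m:ℝ) * Real.log ((m:ℝ)/n/P)) = ((m:ℝ)/n/P) ^ m := by
    rcases Nat.eq_zero_or_pos m with h | h
    · subst h; simp
    · have : (0:ℝ) < (m:ℝ)/n/P := by
        have : (0:ℝ) < m := by exact_mod_cast h
        positivity
      rw [← Real.log_pow, Real.exp_log (by positivity)]
  have e2 : Real.exp (((n - m : ℕ):ℝ) * Real.log (((n - m : ℕ):ℝ)/n/(1-P)))
      = (((n - m : ℕ):ℝ)/n/(1-P)) ^ (n - m) := by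
    rcases Nat.eq_zero_or_pos (n - m) with h | h
    · rw [h]; simp
    · have : (0:ℝ) < ((n - m : ℕ):ℝ)/n/(1-P) := by
        have : (0:ℝ) < ((n-m:ℕ):ℝ) := by exact_mod_cast h
        positivity
      rw [← Real.log_pow, Real.exp_log (by positivity)]
  rw [e1, e2]
  unfold Bio
  have hpow : ((m:ℝ)/n/P) ^ m = (m:ℝ)^m / (n:ℝ)^m / P^m := by
    rw [div_pow, div_pow]
  have hpow2 : (((n - m : ℕ):ℝ)/n/(1-P)) ^ (n-m)
      = ((n - m : ℕ):ℝ)^(n-m) / (n:ℝ)^(n-m) / (1-P)^(n-m) := by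
    rw [div_pow, div_pow]
  rw [hpow, hpow2]
  have hnn : (n:ℝ)^m * (n:ℝ)^(n-m) = (n:ℝ)^n := by
    rw [← pow_add]
    congr 1
    omega
  have hP0' : P ^ m ≠ 0 := by positivity
  have hq0' : (1-P) ^ (n-m) ≠ 0 := by positivity
  have hn0' : (n:ℝ)^m ≠ 0 := by positivity
  have hn0'' : (n:ℝ)^(n-m) ≠ 0 := by positivity
  field_simp
  rw [← hnn]
  ring

lemma base_case (n : ℕ) (hn : 1 ≤ n)
    (h : (∑ m ∈ Finset.range (n+1), n.choose m * m^m * (n-m)^(n-m))^2 ≤ 4*n*((n^n)^2)) :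
    ((∑ m ∈ Finset.range (n+1), n.choose m * m^m * (n-m)^(n-m) : ℕ) : ℝ) / (n:ℝ)^n
      ≤ 2 * Real.sqrt n := by
  set A : ℕ := ∑ m ∈ Finset.range (n+1), n.choose m * m^m * (n-m)^(n-m) with hA
  have hN : (0:ℝ) < (n:ℝ)^n := by
    have : (0:ℝ) < n := by exact_mod_cast hn
    positivity
  have key : ((A:ℝ) / (n:ℝ)^n)^2 ≤ 4 * n := by
    rw [div_pow, div_le_iff₀ (by positivity)]
    have : ((A:ℝ))^2 ≤ 4*n*(((n:ℝ)^n)^2) := by exact_mod_cast h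
    linarith
  have h4 : Real.sqrt (4 * n) = 2 * Real.sqrt n := by
    rw [show (4:ℝ) * n = 2^2 * n by ring, Real.sqrt_mul (by positivity),
      Real.sqrt_sq (by norm_num)]
  rw [← h4]
  have h0 : (0:ℝ) ≤ (A:ℝ) / (n:ℝ)^n := by positivity
  calc (A:ℝ) / (n:ℝ)^n = Real.sqrt (((A:ℝ) / (n:ℝ)^n)^2) := (Real.sqrt_sq h0).symm
    _ ≤ Real.sqrt (4 * n) := Real.sqrt_le_sqrt key

/-- Langford–Seeger-style moment bound: for `m ∼ Binomial(n,P)` with `n ≥ 1`,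
`E[exp(n·kl(m/n, P))] ≤ 2√n`. -/
theorem langford_seeger_moment_bound (n : ℕ) (hn : 1 ≤ n)
    (P : ℝ) (hP : P ∈ Set.Ioo (0 : ℝ) 1) :
    (∑ m ∈ Finset.range (n + 1),
        Bio m n P * Real.exp ((n : ℝ) * binKL ((m : ℝ) / n) P))
      ≤ 2 * Real.sqrt n := by
  have hN : (0:ℝ) < n := by exact_mod_cast hn
  have hsum : (∑ m ∈ Finset.range (n + 1),
      Bio m n P * Real.exp ((n : ℝ) * binKL ((m : ℝ) / n) P))
      = ∑ m ∈ Finset.range (n + 1),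
        (n.choose m : ℝ) * (m : ℝ) ^ m * ((n - m : ℕ) : ℝ) ^ (n - m) / (n : ℝ) ^ n := by
    apply Finset.sum_congr rfl
    intro m hm
    rw [Finset.mem_range] at hm
    exact term_eq n m hn (by omega) P hP
  rw [hsum]
  rcases lt_or_ge n 18 with h18 | h18
  · -- base cases
    have hnat : (∑ m ∈ Finset.range (n + 1),
        (n.choose m : ℝ) * (m : ℝ) ^ m * ((n - m : ℕ) : ℝ) ^ (n - m) / (n : ℝ) ^ n)
        = ((∑ m ∈ Finset.range (n+1), n.choose m * m^m * (n-m)^(n-m) : ℕ) : ℝ) / (n:ℝ)^n := by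
      rw [Nat.cast_sum, Finset.sum_div]
      apply Finset.sum_congr rfl
      intro m _
      push_cast
      ring
    rw [hnat]
    apply base_case n hn
    interval_cases n <;> decide
  · -- analytic case
    set g : ℕ → ℝ := fun m =>
      (n.choose m : ℝ) * (m : ℝ) ^ m * ((n - m : ℕ) : ℝ) ^ (n - m) / (n : ℝ) ^ n with hg
    have hg0 : g 0 = 1 := by
      simp only [hg, Nat.choose_zero_right, Nat.sub_zero, pow_zero, Nat.cast_one, one_mul,
        mul_one]
      exact div_self (by positivity)
    have hgn : g n = 1 := by
      simp only [hg, Nat.choose_self, Nat.sub_self, pow_zero, Nat.cast_one, Nat.cast_zero,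
        one_mul, mul_one]
      exact div_self (by positivity)
    have hsplit : ∑ m ∈ Finset.range (n + 1), g m
        = g 0 + (∑ m ∈ Finset.Ico 1 n, g m) + g n := by
      rw [Finset.sum_range_succ, Finset.range_eq_Ico,
        Finset.sum_eq_sum_Ico_succ_bot (by omega : 0 < n)]
    have hmid : (∑ m ∈ Finset.Ico 1 n, g m)
        ≤ exp 1 / (2 * π) * (2 * (2 * Real.sqrt n - 1)) := by
      calc (∑ m ∈ Finset.Ico 1 n, g m)
          ≤ ∑ m ∈ Finset.Ico 1 n,
            (exp 1 / (2 * π) * (Real.sqrt (1 / (m:ℝ)) + Real.sqrt (1 / ((n - m : ℕ):ℝ)))) := by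
            apply Finset.sum_le_sum
            intro m hm
            rw [Finset.mem_Ico] at hm
            exact term_bound n m hm.1 hm.2
        _ = exp 1 / (2 * π) * ((∑ m ∈ Finset.Ico 1 n, Real.sqrt (1 / (m:ℝ)))
              + ∑ m ∈ Finset.Ico 1 n, Real.sqrt (1 / ((n - m : ℕ):ℝ))) := by
            rw [← Finset.sum_add_distrib, ← Finset.mul_sum]
        _ = exp 1 / (2 * π) * (2 * ∑ m ∈ Finset.Ico 1 n, Real.sqrt (1 / (m:ℝ))) := by
            rw [sum_reflect]
            ring
        _ ≤ exp 1 / (2 * π) * (2 * (2 * Real.sqrt n - 1)) := by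
            have hico : Finset.Ico 1 n = Finset.Icc 1 (n-1) := by
              rw [← Finset.Ico_add_one_right_eq_Icc]
              congr 1
              omega
            have hs : (∑ m ∈ Finset.Ico 1 n, Real.sqrt (1 / (m:ℝ)))
                ≤ 2 * Real.sqrt n - 1 := by
              rw [hico]
              calc (∑ m ∈ Finset.Icc 1 (n-1), Real.sqrt (1 / (m:ℝ)))
                  ≤ 2 * Real.sqrt (n-1:ℕ) - 1 := sum_inv_sqrt (n-1) (by omega)
                _ ≤ 2 * Real.sqrt n - 1 := by
                    have : Real.sqrt ((n-1:ℕ):ℝ) ≤ Real.sqrt n := by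
                      apply Real.sqrt_le_sqrt
                      have : ((n-1:ℕ):ℝ) ≤ (n:ℝ) := by
                        exact_mod_cast Nat.sub_le n 1
                      linarith
                    linarith
            exact mul_le_mul_of_nonneg_left (by linarith [hs]) (by positivity)
    have hnum : 2 + exp 1 / (2 * π) * (2 * (2 * Real.sqrt n - 1)) ≤ 2 * Real.sqrt n := by
      have hs : (4.242:ℝ) ≤ Real.sqrt n := by
        have h18' : (18:ℝ) ≤ n := by exact_mod_cast h18
        calc (4.242:ℝ) ≤ Real.sqrt 18 := by
              have h := Real.sq_sqrt (show (0:ℝ) ≤ 18 by norm_num)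
              nlinarith [Real.sqrt_nonneg (18:ℝ)]
          _ ≤ Real.sqrt n := Real.sqrt_le_sqrt h18'
      have he1 : exp 1 < 2.7182818286 := Real.exp_one_lt_d9
      have hpi1 : (3.141592:ℝ) < π := Real.pi_gt_d6
      have hpi2 : π < 3.141593 := Real.pi_lt_d6
      have hkey : exp 1 * (2 * (2 * Real.sqrt n - 1)) ≤ (2 * Real.sqrt n - 2) * (2 * π) := by
        nlinarith [hs, he1, hpi1, hpi2, Real.exp_pos 1]
      have h2π : (0:ℝ) < 2 * π := by positivity
      have expand : exp 1 / (2 * π) * (2 * (2 * Real.sqrt n - 1))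
          = exp 1 * (2 * (2 * Real.sqrt n - 1)) / (2 * π) := by ring
      have hfin : exp 1 * (2 * (2 * Real.sqrt n - 1)) / (2 * π) ≤ 2 * Real.sqrt n - 2 := by
        rw [div_le_iff₀ h2π]
        exact hkey
      rw [expand]
      linarith
    calc ∑ m ∈ Finset.range (n + 1), g m
        = g 0 + (∑ m ∈ Finset.Ico 1 n, g m) + g n := hsplit
      _ ≤ 1 + (exp 1 / (2 * π) * (2 * (2 * Real.sqrt n - 1))) + 1 := by
          rw [hg0, hgn]
          linarith [hmid]
      _ ≤ 2 * Real.sqrt n := by linarith [hnum]
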